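/- Let H_1, H_2 be parity check matrices over F_2, and let L be any vector of the form L = (Σ_{k,j} λ_{kj} x̄_k ⊗ y_j, Σ_{ℓ,m} κ_{ℓm} a_ℓ ⊗ b̄_m) ∈ F_2^{n_1 n_2 + r_1 r_2}, where the x̄_k ∈ ker(H_1) are linearly independent, the b̄_m ∈ ker(H_2^T) are linearly independent, the y_j are distinct unit vectors in F_2^{n_2} that are linearly independent modulo Im(H_2^T), the a_ℓ are distinct unit vectors in F_2^{r_1} linearly independent modulo Im(H_1), and not all coefficients λ, κ are zero. Then the energy barrier of L with respect to H_X = (H_1 ⊗ I_{n_2} | I_{r_1} ⊗ H_2^T) satisfies Δ_{H_X}(L) ≥ min(Δ_{H_1}, Δ_{H_2^T}), where Δ_{H_1} (resp. Δ_{H_2^T}) denotes the minimum classical energy barrier over nonzero codewords of H_1 (resp. of H_2^T). -/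

import Mathlib

/-!
Suppose some `λ_{k j₀} ≠ 0`; the case `κ ≠ 0` is the same with rows and columns exchanged.
Since the `y_j` are independent modulo `Im H₂ᵀ`, duality gives `z ∈ ker H₂` with
`⟨y_j, z⟩ = δ_{j j₀}`. Reshape the left sector of a vector into an `n₁ × n₂` matrix `X` and the
right one into an `r₁ × r₂` matrix `Y`; the syndrome is then `H₁ X + Y H₂`. The map `v ↦ X z`
is additive and does not increase Hamming weight, it sends `L` to the nonzero codeword
`∑ₖ λ_{k j₀} x̄ₖ` of `H₁`, and since `H₂ z = 0` it sends the syndrome to `H₁ (X z)`, whose weight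
is at most that of the syndrome. So it maps every flip path for `L` to a flip path for that
codeword with no larger energy.
-/

open Matrix Kronecker

/-- Hamming weight of a vector over `ZMod 2`. -/
def wt {α : Type*} [Fintype α] (v : α → ZMod 2) : ℕ :=
  (Finset.univ.filter fun i => v i ≠ 0).card

/-- Number of nonzero entries of a matrix over `ZMod 2`. -/
def mwt {α β : Type*} [Fintype α] [Fintype β] (M : Matrix α β (ZMod 2)) : ℕ :=
  (Finset.univ.filter fun p : α × β => M p.1 p.2 ≠ 0).card

/-- Energy barrier of a vector `s` w.r.t. parity check matrix `H`: the minimum over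
single-bit-flip paths from `0` to `s` of the maximum energy `wt (H·v)` along the path. -/
noncomputable def eb {α β : Type*} [Fintype α] [Fintype β] (H : Matrix α β (ZMod 2)) (s : β → ZMod 2) : ℕ :=
  sInf {B | ∃ F : ℕ, ∃ v : Fin (F + 1) → β → ZMod 2,
    v 0 = 0 ∧ v (Fin.last F) = s ∧
    (∀ i : Fin F, wt (v i.castSucc + v i.succ) ≤ 1) ∧
    ∀ i, wt (H.mulVec (v i)) ≤ B}

/-- Energy barrier of a classical code: minimum of `eb` over nonzero codewords. -/
noncomputable def codeEB {α β : Type*} [Fintype α] [Fintype β] (M : Matrix α β (ZMod 2)) : ℕ :=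
  sInf {E | ∃ c, c ≠ 0 ∧ M.mulVec c = 0 ∧ eb M c = E}

/-- The X-type parity check matrix of the hypergraph product code. -/
def HX {r1 n1 r2 n2 : ℕ} (H1 : Matrix (Fin r1) (Fin n1) (ZMod 2))
    (H2 : Matrix (Fin r2) (Fin n2) (ZMod 2)) :
    Matrix (Fin r1 × Fin n2) ((Fin n1 × Fin n2) ⊕ (Fin r1 × Fin r2)) (ZMod 2) :=
  Matrix.fromCols (H1 ⊗ₖ (1 : Matrix (Fin n2) (Fin n2) (ZMod 2)))
    ((1 : Matrix (Fin r1) (Fin r1) (ZMod 2)) ⊗ₖ H2ᵀ)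

section Weight

variable {α β : Type*} [Fintype α] [Fintype β]

theorem wt_le_card (v : α → ZMod 2) : wt v ≤ Fintype.card α :=
  Finset.card_filter_le _ _

theorem wt_comp_le (v : β → ZMod 2) {f : α → β} (hf : Function.Injective f) :
    wt (v ∘ f) ≤ wt v :=
  Finset.card_le_card_of_injOn f (fun a ha => by simpa [wt] using ha) hf.injOn

theorem wt_le_one_of_eq_zero_of_ne {v : α → ZMod 2} (a : α) (hv : ∀ b, b ≠ a → v b = 0) :
    wt v ≤ 1 := by
  refine (Finset.card_le_card fun b hb => ?_).trans (Finset.card_singleton a).le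
  by_contra hba
  exact (Finset.mem_filter.mp hb).2 (hv b (Finset.notMem_singleton.mp hba))

theorem mwt_of_curry (u : α × β → ZMod 2) : mwt (of (Function.curry u)) = wt u :=
  rfl

theorem wt_mulVec_le_mwt (M : Matrix α β (ZMod 2)) (z : β → ZMod 2) : wt (M *ᵥ z) ≤ mwt M := by
  classical
  refine (Finset.card_le_card (t := (Finset.univ.filter fun p : α × β => M p.1 p.2 ≠ 0).image
    Prod.fst) fun i hi => ?_).trans Finset.card_image_le
  obtain ⟨j, -, hj⟩ := Finset.exists_ne_zero_of_sum_ne_zero (Finset.mem_filter.mp hi).2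
  exact Finset.mem_image.mpr ⟨(i, j), by simpa using left_ne_zero_of_mul hj, rfl⟩

theorem wt_vecMul_le_mwt (M : Matrix α β (ZMod 2)) (z : α → ZMod 2) : wt (z ᵥ* M) ≤ mwt M := by
  classical
  refine (Finset.card_le_card (t := (Finset.univ.filter fun p : α × β => M p.1 p.2 ≠ 0).image
    Prod.snd) fun j hj => ?_).trans Finset.card_image_le
  obtain ⟨i, -, hi⟩ := Finset.exists_ne_zero_of_sum_ne_zero (Finset.mem_filter.mp hj).2
  exact Finset.mem_image.mpr ⟨(i, j), by simpa using right_ne_zero_of_mul hi, rfl⟩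

end Weight

theorem vecMul_of_eq_sum {ι β R : Type*} [Fintype ι] [Semiring R] (μ : ι → R) (X : ι → β → R) :
    μ ᵥ* of X = ∑ k, μ k • X k :=
  vecMul_eq_sum μ (of X)

section EnergyBarrier

variable {α β α' β' ι : Type*} [Fintype α] [Fintype β] [Fintype α'] [Fintype β'] [Fintype ι]

theorem exists_flip_path (s : β → ZMod 2) :
    ∃ (F : ℕ) (v : Fin (F + 1) → β → ZMod 2), v 0 = 0 ∧ v (Fin.last F) = s ∧
      ∀ i : Fin F, wt (v i.castSucc + v i.succ) ≤ 1 := by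
  classical
  let e := Fintype.equivFin β
  refine ⟨Fintype.card β, fun i b => if (e b : ℕ) < i then s b else 0, by ext; simp,
    by ext b; simp [(e b).isLt], fun i => wt_le_one_of_eq_zero_of_ne (e.symm i) fun b hb => ?_⟩
  have : (e b : ℕ) ≠ i := fun h => hb (e.symm_apply_eq.mpr (Fin.ext h.symm)).symm
  simp only [Pi.add_apply, Fin.val_castSucc, Fin.val_succ]
  split_ifs <;> first | omega | exact CharTwo.add_self_eq_zero _

theorem eb_map_le (H : Matrix α β (ZMod 2)) (H' : Matrix α' β' (ZMod 2))
    (T : (β → ZMod 2) →+ (β' → ZMod 2)) (hT : ∀ u, wt (T u) ≤ wt u)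
    (hsyn : ∀ u, wt (H' *ᵥ T u) ≤ wt (H *ᵥ u)) (s : β → ZMod 2) :
    eb H' (T s) ≤ eb H s := by
  obtain ⟨F, v, h0, hF, hflip⟩ := exists_flip_path s
  refine le_csInf ⟨_, F, v, h0, hF, hflip, fun i => wt_le_card (H *ᵥ v i)⟩ ?_
  rintro B ⟨F, v, h0, hF, hflip, hB⟩
  refine Nat.sInf_le ⟨F, T ∘ v, by simp [h0], by simp [hF], fun i => ?_,
    fun i => (hsyn _).trans (hB i)⟩
  simpa only [Function.comp_apply, ← map_add] using (hT _).trans (hflip i)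

theorem codeEB_le_eb_vecMul (M : Matrix α β (ZMod 2)) {X : ι → β → ZMod 2}
    (hX : ∀ k, M *ᵥ X k = 0) (hind : LinearIndependent (ZMod 2) X) {μ : ι → ZMod 2}
    (hμ : μ ≠ 0) : codeEB M ≤ eb M (μ ᵥ* of X) := by
  refine Nat.sInf_le ⟨_, fun h => hμ ((vecMul_injective_iff (M := of X)).mpr hind ?_), ?_, rfl⟩
  · exact h.trans (zero_vecMul _).symm
  · simp [vecMul_of_eq_sum, mulVec_sum, mulVec_smul, hX]

end EnergyBarrier

section Duality

variable {K ι κ γ : Type*} [Field K] [Fintype ι] [Fintype κ] [Fintype γ]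

theorem exists_transpose_mulVec_eq_of_dotProduct_eq_zero (H : Matrix ι κ K) (u : κ → K)
    (hu : ∀ z, H *ᵥ z = 0 → u ⬝ᵥ z = 0) : ∃ w, Hᵀ *ᵥ w = u := by
  classical
  obtain ⟨ψ, hψ⟩ : dotProductEquiv K κ u ∈ LinearMap.range H.mulVecLin.dualMap := by
    rw [LinearMap.range_dualMap_eq_dualAnnihilator_ker, Submodule.mem_dualAnnihilator]
    exact hu
  refine ⟨(dotProductEquiv K ι).symm ψ, dotProduct_eq _ _ fun z => ?_⟩
  rw [mulVec_transpose, ← dotProduct_mulVec, ← dotProductEquiv_apply_apply,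
    LinearEquiv.apply_symm_apply]
  simpa using LinearMap.congr_fun hψ z

theorem exists_mulVec_eq_zero_and_mulVec_eq (H : Matrix ι κ K) (Y : Matrix γ κ K)
    (hY : ∀ μ : γ → K, (∃ w, Hᵀ *ᵥ w = μ ᵥ* Y) → μ = 0) (t : γ → K) :
    ∃ z, H *ᵥ z = 0 ∧ Y *ᵥ z = t := by
  classical
  have hsurj : Function.Surjective (Y.mulVecLin ∘ₗ (LinearMap.ker H.mulVecLin).subtype) := by
    rw [← LinearMap.dualMap_injective_iff, ← LinearMap.ker_eq_bot, Submodule.eq_bot_iff]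
    intro g hg
    have hμ : (dotProductEquiv K γ).symm g = 0 := by
      refine hY _ (exists_transpose_mulVec_eq_of_dotProduct_eq_zero H _ fun z hz => ?_)
      rw [← dotProduct_mulVec, ← dotProductEquiv_apply_apply, LinearEquiv.apply_symm_apply]
      simpa using LinearMap.congr_fun hg ⟨z, hz⟩
    simpa using hμ
  obtain ⟨⟨z, hz⟩, hzt⟩ := hsurj t
  exact ⟨z, hz, hzt⟩

end Duality

section HypergraphProduct

variable {α β γ δ R : Type*}

theorem of_sum_sum_mul_mul [Fintype γ] [Fintype δ] [CommSemiring R] (Λ : γ → δ → R)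
    (X : γ → α → R) (Y : δ → β → R) :
    of (fun p q => ∑ k, ∑ j, Λ k j * X k p * Y j q) = (of X)ᵀ * of Λ * of Y := by
  ext p q
  simp only [of_apply, mul_apply, transpose_apply, Finset.sum_mul]
  rw [Finset.sum_comm]
  exact Finset.sum_congr rfl fun j _ => Finset.sum_congr rfl fun k _ => by ring

def leftBlock (v : (α × β) ⊕ (γ × δ) → R) : Matrix α β R :=
  of (Function.curry (v ∘ Sum.inl))

def rightBlock (v : (α × β) ⊕ (γ × δ) → R) : Matrix γ δ R :=
  of (Function.curry (v ∘ Sum.inr))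

theorem leftBlock_add [Add R] (u w : (α × β) ⊕ (γ × δ) → R) :
    leftBlock (u + w) = leftBlock u + leftBlock w :=
  rfl

theorem rightBlock_add [Add R] (u w : (α × β) ⊕ (γ × δ) → R) :
    rightBlock (u + w) = rightBlock u + rightBlock w :=
  rfl

variable {r1 n1 r2 n2 : ℕ} (H1 : Matrix (Fin r1) (Fin n1) (ZMod 2))
  (H2 : Matrix (Fin r2) (Fin n2) (ZMod 2))

theorem of_curry_HX_mulVec (v : (Fin n1 × Fin n2) ⊕ (Fin r1 × Fin r2) → ZMod 2) :
    of (Function.curry (HX H1 H2 *ᵥ v)) = H1 * leftBlock v + rightBlock v * H2 := by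
  ext i j
  simp [HX, leftBlock, rightBlock, mulVec, dotProduct, Fintype.sum_prod_type, mul_apply,
    one_apply, mul_comm]

theorem eb_mulVec_leftBlock_le {z : Fin n2 → ZMod 2} (hz : H2 *ᵥ z = 0)
    (s : (Fin n1 × Fin n2) ⊕ (Fin r1 × Fin r2) → ZMod 2) :
    eb H1 (leftBlock s *ᵥ z) ≤ eb (HX H1 H2) s := by
  refine eb_map_le (HX H1 H2) H1 (AddMonoidHom.mk' (leftBlock · *ᵥ z) fun u w => by
    rw [leftBlock_add, add_mulVec]) (fun u => ?_) (fun u => ?_) s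
  · exact (wt_mulVec_le_mwt _ z).trans (wt_comp_le u Sum.inl_injective)
  · have hsyn : H1 *ᵥ (leftBlock u *ᵥ z) = of (Function.curry (HX H1 H2 *ᵥ u)) *ᵥ z := by
      rw [of_curry_HX_mulVec, add_mulVec, ← mulVec_mulVec, ← mulVec_mulVec, hz, mulVec_zero,
        add_zero]
    rw [AddMonoidHom.mk'_apply, hsyn, ← mwt_of_curry]
    exact wt_mulVec_le_mwt _ z

theorem eb_vecMul_rightBlock_le {z : Fin r1 → ZMod 2} (hz : z ᵥ* H1 = 0)
    (s : (Fin n1 × Fin n2) ⊕ (Fin r1 × Fin r2) → ZMod 2) :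
    eb H2ᵀ (z ᵥ* rightBlock s) ≤ eb (HX H1 H2) s := by
  refine eb_map_le (HX H1 H2) H2ᵀ (AddMonoidHom.mk' (z ᵥ* rightBlock ·) fun u w => by
    rw [rightBlock_add, vecMul_add]) (fun u => ?_) (fun u => ?_) s
  · exact (wt_vecMul_le_mwt _ z).trans (wt_comp_le u Sum.inr_injective)
  · have hsyn : H2ᵀ *ᵥ (z ᵥ* rightBlock u) = z ᵥ* of (Function.curry (HX H1 H2 *ᵥ u)) := by
      rw [of_curry_HX_mulVec, vecMul_add, ← vecMul_vecMul, ← vecMul_vecMul, hz, zero_vecMul,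
        zero_add, mulVec_transpose]
    rw [AddMonoidHom.mk'_apply, hsyn, ← mwt_of_curry]
    exact wt_vecMul_le_mwt _ z

end HypergraphProduct

theorem stmt14_general {r1 n1 r2 n2 a b c d : ℕ}
    (H1 : Matrix (Fin r1) (Fin n1) (ZMod 2)) (H2 : Matrix (Fin r2) (Fin n2) (ZMod 2))
    (xbar : Fin a → Fin n1 → ZMod 2) (hxker : ∀ k, H1.mulVec (xbar k) = 0)
    (hxind : LinearIndependent (ZMod 2) xbar)
    (bbar : Fin b → Fin r2 → ZMod 2) (hbker : ∀ m, H2ᵀ.mulVec (bbar m) = 0)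
    (hbind : LinearIndependent (ZMod 2) bbar)
    (y : Fin c → Fin n2 → ZMod 2)
    (hyind : ∀ μ : Fin c → ZMod 2, (∃ w, H2ᵀ.mulVec w = ∑ j, μ j • y j) → μ = 0)
    (avec : Fin d → Fin r1 → ZMod 2)
    (haind : ∀ μ : Fin d → ZMod 2, (∃ w, H1.mulVec w = ∑ l, μ l • avec l) → μ = 0)
    (lam : Fin a → Fin c → ZMod 2) (kap : Fin d → Fin b → ZMod 2)
    (hne : lam ≠ 0 ∨ kap ≠ 0) :
    min (codeEB H1) (codeEB H2ᵀ) ≤ eb (HX H1 H2)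
      (Sum.elim (fun p : Fin n1 × Fin n2 => ∑ k, ∑ j, lam k j * xbar k p.1 * y j p.2)
        (fun p : Fin r1 × Fin r2 => ∑ l, ∑ m, kap l m * avec l p.1 * bbar m p.2)) := by
  set L := Sum.elim (fun p : Fin n1 × Fin n2 => ∑ k, ∑ j, lam k j * xbar k p.1 * y j p.2)
    (fun p : Fin r1 × Fin r2 => ∑ l, ∑ m, kap l m * avec l p.1 * bbar m p.2)
  rcases hne with hlam | hkap
  · obtain ⟨j0, hj0⟩ : ∃ j0, (of lam)ᵀ j0 ≠ 0 := by
      by_contra! h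
      exact hlam (funext fun k => funext fun j => congrFun (h j) k)
    obtain ⟨z, hz, hyz⟩ := exists_mulVec_eq_zero_and_mulVec_eq H2 (of y)
      (fun μ hμ => hyind μ (by rwa [← vecMul_of_eq_sum])) (Pi.single j0 1)
    have hLz : leftBlock L *ᵥ z = (of lam)ᵀ j0 ᵥ* of xbar := by
      rw [show leftBlock L = _ from of_sum_sum_mul_mul lam xbar y, ← mulVec_mulVec, hyz,
        mulVec_single_one]
      ext
      simp [vecMul, dotProduct, mul_apply, mul_comm]
    calc min (codeEB H1) (codeEB H2ᵀ) ≤ codeEB H1 := min_le_left _ _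
      _ ≤ eb H1 ((of lam)ᵀ j0 ᵥ* of xbar) := codeEB_le_eb_vecMul H1 hxker hxind hj0
      _ ≤ eb (HX H1 H2) L := hLz ▸ eb_mulVec_leftBlock_le H1 H2 hz L
  · obtain ⟨l0, hl0⟩ : ∃ l0, kap l0 ≠ 0 := by
      by_contra! h
      exact hkap (funext h)
    obtain ⟨z, hz, haz⟩ := exists_mulVec_eq_zero_and_mulVec_eq H1ᵀ (of avec)
      (fun μ hμ => haind μ (by rwa [← vecMul_of_eq_sum])) (Pi.single l0 1)
    have hzL : z ᵥ* rightBlock L = kap l0 ᵥ* of bbar := by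
      rw [show rightBlock L = _ from of_sum_sum_mul_mul kap avec bbar, ← vecMul_vecMul,
        ← vecMul_vecMul, vecMul_transpose, haz, single_one_vecMul]
      rfl
    calc min (codeEB H1) (codeEB H2ᵀ) ≤ codeEB H2ᵀ := min_le_right _ _
      _ ≤ eb H2ᵀ (kap l0 ᵥ* of bbar) := codeEB_le_eb_vecMul H2ᵀ hbker hbind hl0
      _ ≤ eb (HX H1 H2) L := hzL ▸ eb_vecMul_rightBlock_le H1 H2 (by rwa [← mulVec_transpose]) L

theorem stmt14 {r1 n1 r2 n2 a b c d : ℕ}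
    (H1 : Matrix (Fin r1) (Fin n1) (ZMod 2)) (H2 : Matrix (Fin r2) (Fin n2) (ZMod 2))
    (xbar : Fin a → Fin n1 → ZMod 2) (hxker : ∀ k, H1.mulVec (xbar k) = 0)
    (hxind : LinearIndependent (ZMod 2) xbar)
    (bbar : Fin b → Fin r2 → ZMod 2) (hbker : ∀ m, H2ᵀ.mulVec (bbar m) = 0)
    (hbind : LinearIndependent (ZMod 2) bbar)
    (y : Fin c → Fin n2 → ZMod 2) (hyunit : ∀ j, ∃ i, y j = Pi.single i 1)
    (hyinj : Function.Injective y)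
    (hyind : ∀ μ : Fin c → ZMod 2, (∃ w, H2ᵀ.mulVec w = ∑ j, μ j • y j) → μ = 0)
    (avec : Fin d → Fin r1 → ZMod 2) (haunit : ∀ l, ∃ i, avec l = Pi.single i 1)
    (hainj : Function.Injective avec)
    (haind : ∀ μ : Fin d → ZMod 2, (∃ w, H1.mulVec w = ∑ l, μ l • avec l) → μ = 0)
    (lam : Fin a → Fin c → ZMod 2) (kap : Fin d → Fin b → ZMod 2)
    (hne : lam ≠ 0 ∨ kap ≠ 0) :
    min (codeEB H1) (codeEB H2ᵀ) ≤ eb (HX H1 H2)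
      (Sum.elim (fun p : Fin n1 × Fin n2 => ∑ k, ∑ j, lam k j * xbar k p.1 * y j p.2)
        (fun p : Fin r1 × Fin r2 => ∑ l, ∑ m, kap l m * avec l p.1 * bbar m p.2)) :=
  stmt14_general H1 H2 xbar hxker hxind bbar hbker hbind y hyind avec haind lam kap hne
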